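/- In the path graph P_n on vertices v₀,…,v_{n−1} with n > 2, for each k with 0 ≤ k < ⌈n/2⌉ − 1, the set L_k = {v₀, v₂, …, v_{2k}} ∪ {v_{2k+1}} is a minimal local set of size k+2. Hence P_n has minimal local sets of every size from 2 to ⌈n/2⌉. -/

import Mathlib

open Finset
open scoped Classical symmDiff

variable {V : Type*} [Fintype V] [DecidableEq V]

/-- The odd neighborhood of a set of vertices `D`: vertices having an odd
number of neighbors in `D`. -/
noncomputable def oddNbhd (G : SimpleGraph V) (D : Finset V) : Finset V :=
  Finset.univ.filter fun v => Odd (D.filter (G.Adj v)).card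

/-- The cut-rank of `A`: the rank over `F₂` of the cut matrix between `A` and its complement. -/
noncomputable def cutrk (G : SimpleGraph V) (A : Finset V) : ℕ :=
  (Matrix.of fun (a : {x // x ∈ A}) (b : {x // x ∈ Aᶜ}) =>
    if G.Adj a.1 b.1 then (1 : ZMod 2) else 0).rank

/-- A local set: a nonempty set of the form `D ∪ Odd(D)`. -/
noncomputable def IsLocalSet (G : SimpleGraph V) (A : Finset V) : Prop :=
  A.Nonempty ∧ ∃ D : Finset V, A = D ∪ oddNbhd G D

/-- A minimal local set: a local set minimal by inclusion. -/
noncomputable def IsMLS (G : SimpleGraph V) (A : Finset V) : Prop :=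
  IsLocalSet G A ∧ ∀ B ⊂ A, ¬ IsLocalSet G B

/-- The path graph on `Fin n`, with edges between consecutive vertices. -/
def pathG (n : ℕ) : SimpleGraph (Fin n) :=
  SimpleGraph.fromRel fun i j => (i : ℕ) + 1 = (j : ℕ)

lemma pathG_adj {n : ℕ} (a b : Fin n) :
    (pathG n).Adj a b ↔ ((a:ℕ)+1 = (b:ℕ) ∨ (b:ℕ)+1 = (a:ℕ)) := by
  rw [pathG, SimpleGraph.fromRel_adj]
  constructor
  · rintro ⟨_, h⟩; exact h
  · intro h
    refine ⟨?_, h⟩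
    rintro rfl
    rcases h with h | h <;> omega

lemma mem_oddNbhd_path {n : ℕ} (D : Finset (Fin n)) (v : Fin n) :
    v ∈ oddNbhd (pathG n) D ↔
      Xor' (∃ w ∈ D, (w:ℕ)+1 = (v:ℕ)) (∃ w ∈ D, (v:ℕ)+1 = (w:ℕ)) := by
  rw [oddNbhd, mem_filter]
  simp only [mem_univ, true_and]
  have hsplit : D.filter ((pathG n).Adj v) =
      D.filter (fun w : Fin n => (w:ℕ)+1 = (v:ℕ)) ∪ D.filter (fun w : Fin n => (v:ℕ)+1 = (w:ℕ)) := by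
    rw [← filter_or]
    apply filter_congr
    intro w _
    rw [pathG_adj]
    constructor
    · rintro (h | h) <;> simp [h]
    · rintro (h | h) <;> simp [h]
  have hdisj : Disjoint (D.filter (fun w : Fin n => (w:ℕ)+1 = (v:ℕ)))
      (D.filter (fun w : Fin n => (v:ℕ)+1 = (w:ℕ))) := by
    rw [disjoint_left]
    intro w hw1 hw2
    simp only [mem_filter] at hw1 hw2
    omega
  rw [hsplit, card_union_of_disjoint hdisj]
  have h1le : (D.filter (fun w : Fin n => (w:ℕ)+1 = (v:ℕ))).card ≤ 1 := by
    apply card_le_one.mpr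
    intro a ha b hb
    simp only [mem_filter] at ha hb
    exact Fin.ext (by omega)
  have h2le : (D.filter (fun w : Fin n => (v:ℕ)+1 = (w:ℕ))).card ≤ 1 := by
    apply card_le_one.mpr
    intro a ha b hb
    simp only [mem_filter] at ha hb
    exact Fin.ext (by omega)
  have h1 : (0 < (D.filter (fun w : Fin n => (w:ℕ)+1 = (v:ℕ))).card) ↔ ∃ w ∈ D, (w:ℕ)+1 = (v:ℕ) := by
    rw [card_pos, filter_nonempty_iff]
  have h2 : (0 < (D.filter (fun w : Fin n => (v:ℕ)+1 = (w:ℕ))).card) ↔ ∃ w ∈ D, (v:ℕ)+1 = (w:ℕ) := by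
    rw [card_pos, filter_nonempty_iff]
  rw [← h1, ← h2, Nat.odd_iff, Xor']
  unfold Xor
  omega

lemma oddNbhd_Dk {n k : ℕ} (hk : 2*k+2 < n) :
    oddNbhd (pathG n) (univ.filter fun w : Fin n => (w:ℕ) ≤ 2*k ∧ Even (w:ℕ)) =
      {(⟨2*k+1, by omega⟩ : Fin n)} := by
  ext v
  rw [mem_oddNbhd_path, mem_singleton]
  constructor
  · rintro (⟨⟨w, hw, hw3⟩, hq⟩ | ⟨⟨w, hw, hw3⟩, hp⟩)
    · simp only [mem_filter, mem_univ, true_and, Nat.even_iff] at hw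
      by_cases h : (w:ℕ) = 2*k
      · exact Fin.ext (by simp; omega)
      · exfalso
        apply hq
        refine ⟨⟨(w:ℕ)+2, by omega⟩, ?_, by simp; omega⟩
        simp only [mem_filter, mem_univ, true_and, Nat.even_iff]
        simp; omega
    · simp only [mem_filter, mem_univ, true_and, Nat.even_iff] at hw
      exfalso
      apply hp
      refine ⟨⟨(w:ℕ)-2, by omega⟩, ?_, by simp; omega⟩
      simp only [mem_filter, mem_univ, true_and, Nat.even_iff]
      simp; omega
  · intro hv
    left
    constructor
    · refine ⟨⟨2*k, by omega⟩, ?_, by simp [hv]⟩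
      simp only [mem_filter, mem_univ, true_and, Nat.even_iff, Fin.val_mk]
      omega
    · rintro ⟨w, hw, hw3⟩
      simp only [mem_filter, mem_univ, true_and, Nat.even_iff] at hw
      subst hv
      simp at hw3
      omega

lemma Ak_eq {n k : ℕ} (hk : 2*k+2 < n) :
    (Finset.univ.filter fun v : Fin n =>
        (v : ℕ) ≤ 2 * k + 1 ∧ (Even (v : ℕ) ∨ (v : ℕ) = 2 * k + 1)) =
      (univ.filter fun w : Fin n => (w:ℕ) ≤ 2*k ∧ Even (w:ℕ)) ∪ {(⟨2*k+1, by omega⟩ : Fin n)} := by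
  ext v
  simp only [mem_filter, mem_univ, true_and, mem_union, mem_singleton, Fin.ext_iff, Nat.even_iff]
  omega

lemma card_Dk {n k : ℕ} (hk : 2*k < n) :
    (univ.filter fun w : Fin n => (w:ℕ) ≤ 2*k ∧ Even (w:ℕ)).card = k+1 := by
  rw [← Finset.card_range (k+1)]
  apply Finset.card_bij' (fun (w : Fin n) _ => (w:ℕ)/2)
    (fun (i : ℕ) hi => (⟨2*i, by simp only [mem_range] at hi; omega⟩ : Fin n))
  all_goals
    intro a ha
    first
    | (simp only [mem_filter, mem_univ, true_and, Nat.even_iff, mem_range,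
        Fin.ext_iff, Fin.val_mk] at ha ⊢
       omega)
    | (simp only [mem_filter, mem_univ, true_and, Nat.even_iff, mem_range,
        Fin.ext_iff, Fin.val_mk] at ha
       omega)
    | omega

lemma oddNbhd_empty {n : ℕ} (G : SimpleGraph (Fin n)) : oddNbhd G ∅ = ∅ := by
  simp [oddNbhd, Nat.odd_iff]

lemma localset_subset_Ak {n k : ℕ} (hk : 2*k+2 < n) (D : Finset (Fin n))
    (hne : (D ∪ oddNbhd (pathG n) D).Nonempty)
    (hsub : D ∪ oddNbhd (pathG n) D ⊆
      (Finset.univ.filter fun v : Fin n =>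
        (v : ℕ) ≤ 2 * k + 1 ∧ (Even (v : ℕ) ∨ (v : ℕ) = 2 * k + 1))) :
    D ∪ oddNbhd (pathG n) D =
      (Finset.univ.filter fun v : Fin n =>
        (v : ℕ) ≤ 2 * k + 1 ∧ (Even (v : ℕ) ∨ (v : ℕ) = 2 * k + 1)) := by
  set A := (Finset.univ.filter fun v : Fin n =>
        (v : ℕ) ≤ 2 * k + 1 ∧ (Even (v : ℕ) ∨ (v : ℕ) = 2 * k + 1)) with hA
  have hmemA : ∀ v : Fin n, v ∈ A ↔ ((v:ℕ) ≤ 2*k+1 ∧ ((v:ℕ) % 2 = 0 ∨ (v:ℕ) = 2*k+1)) := by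
    intro v
    rw [hA, mem_filter, Nat.even_iff]
    simp
  have hDA : ∀ w ∈ D, (w:ℕ) ≤ 2*k+1 ∧ ((w:ℕ) % 2 = 0 ∨ (w:ℕ) = 2*k+1) := by
    intro w hw
    exact (hmemA w).mp (hsub (mem_union_left _ hw))
  have hOA : ∀ v ∈ oddNbhd (pathG n) D, (v:ℕ) ≤ 2*k+1 ∧ ((v:ℕ) % 2 = 0 ∨ (v:ℕ) = 2*k+1) := by
    intro v hv
    exact (hmemA v).mp (hsub (mem_union_right _ hv))
  -- 2k+1 is not in D
  have h21 : ((⟨2*k+1, by omega⟩ : Fin n)) ∉ D := by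
    intro hmem
    have hv : (⟨2*k+2, by omega⟩ : Fin n) ∈ oddNbhd (pathG n) D := by
      rw [mem_oddNbhd_path]
      left
      constructor
      · exact ⟨_, hmem, by simp⟩
      · rintro ⟨w, hw, hw3⟩
        have := hDA w hw
        simp only [Fin.val_mk] at hw3
        omega
    have := hOA _ hv
    simp only [Fin.val_mk] at this
    omega
  -- all elements of D are even and ≤ 2k
  have hDev : ∀ w ∈ D, (w:ℕ) ≤ 2*k ∧ (w:ℕ) % 2 = 0 := by
    intro w hw
    have h := hDA w hw
    rcases h.2 with h2 | h2
    · omega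
    · exfalso
      apply h21
      have : w = (⟨2*k+1, by omega⟩ : Fin n) := Fin.ext (by simpa using h2)
      rwa [this] at hw
  set Q : ℕ → Prop := fun m => ∃ w ∈ D, (w:ℕ) = m with hQdef
  -- adjacent even vertices agree
  have hagree : ∀ j, ∀ _hj : j < k, (Q (2*j) ↔ Q (2*j+2)) := by
    intro j hj
    by_contra hxor
    have hv : (⟨2*j+1, by omega⟩ : Fin n) ∈ oddNbhd (pathG n) D := by
      rw [mem_oddNbhd_path]
      have e1 : (∃ w ∈ D, (w:ℕ)+1 = ((⟨2*j+1, by omega⟩ : Fin n):ℕ)) ↔ Q (2*j) := by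
        simp only [hQdef, Fin.val_mk]
        constructor
        · rintro ⟨w, hw, hw3⟩
          exact ⟨w, hw, by omega⟩
        · rintro ⟨w, hw, hw3⟩
          exact ⟨w, hw, by omega⟩
      have e2 : (∃ w ∈ D, ((⟨2*j+1, by omega⟩ : Fin n):ℕ)+1 = (w:ℕ)) ↔ Q (2*j+2) := by
        simp only [hQdef, Fin.val_mk]
        constructor
        · rintro ⟨w, hw, hw3⟩
          exact ⟨w, hw, by omega⟩
        · rintro ⟨w, hw, hw3⟩
          exact ⟨w, hw, by omega⟩
      rw [Xor', e1, e2]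
      rcases Classical.em (Q (2*j)) with h1 | h1 <;>
        rcases Classical.em (Q (2*j+2)) with h2 | h2
      · exact absurd (iff_of_true h1 h2) hxor
      · exact Or.inl ⟨h1, h2⟩
      · exact Or.inr ⟨h2, h1⟩
      · exact absurd (iff_of_false h1 h2) hxor
    have := hOA _ hv
    simp only [Fin.val_mk] at this
    omega
  -- D is nonempty
  have hDne : D.Nonempty := by
    rcases Finset.eq_empty_or_nonempty D with h | h
    · exfalso
      rw [h, oddNbhd_empty, empty_union] at hne
      exact absurd rfl hne.ne_empty
    · exact h
  obtain ⟨w0, hw0⟩ := hDne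
  obtain ⟨hle0, hev0⟩ := hDev w0 hw0
  -- chain: Q 0 iff Q (2i)
  have hchain : ∀ i, ∀ _hi : i ≤ k, (Q 0 ↔ Q (2*i)) := by
    intro i
    induction i with
    | zero => intro _; rfl
    | succ i ih =>
      intro hi
      rw [show 2*(i+1) = 2*i+2 by ring]
      exact (ih (by omega)).trans (hagree i (by omega))
  have hP0 : Q 0 := by
    have h1 : Q (2*((w0:ℕ)/2)) := ⟨w0, hw0, by omega⟩
    exact (hchain ((w0:ℕ)/2) (by omega)).mpr h1
  have hall : ∀ i, ∀ _hi : i ≤ k, Q (2*i) := fun i hi => (hchain i hi).mp hP0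
  -- D equals D_k
  have hDk : D = univ.filter fun w : Fin n => (w:ℕ) ≤ 2*k ∧ Even (w:ℕ) := by
    ext w
    simp only [mem_filter, mem_univ, true_and, Nat.even_iff]
    constructor
    · intro hw
      exact hDev w hw
    · rintro ⟨h1, h2⟩
      obtain ⟨u, hu, hu2⟩ := hall ((w:ℕ)/2) (by omega)
      have : u = w := Fin.ext (by omega)
      rwa [← this]
  rw [hDk, oddNbhd_Dk hk, hA, Ak_eq hk]

theorem path_MLS (n : ℕ) (hn : 2 < n) :
    (∀ k : ℕ, k < (n + 1) / 2 - 1 →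
      IsMLS (pathG n)
        (Finset.univ.filter fun v : Fin n =>
          (v : ℕ) ≤ 2 * k + 1 ∧ (Even (v : ℕ) ∨ (v : ℕ) = 2 * k + 1)) ∧
      (Finset.univ.filter fun v : Fin n =>
          (v : ℕ) ≤ 2 * k + 1 ∧ (Even (v : ℕ) ∨ (v : ℕ) = 2 * k + 1)).card = k + 2) ∧
    ∀ s : ℕ, 2 ≤ s → s ≤ (n + 1) / 2 →
      ∃ L : Finset (Fin n), IsMLS (pathG n) L ∧ L.card = s := by
  have main : ∀ k : ℕ, k < (n + 1) / 2 - 1 →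
      IsMLS (pathG n)
        (Finset.univ.filter fun v : Fin n =>
          (v : ℕ) ≤ 2 * k + 1 ∧ (Even (v : ℕ) ∨ (v : ℕ) = 2 * k + 1)) ∧
      (Finset.univ.filter fun v : Fin n =>
          (v : ℕ) ≤ 2 * k + 1 ∧ (Even (v : ℕ) ∨ (v : ℕ) = 2 * k + 1)).card = k + 2 := by
    intro k hkb
    have hk : 2*k+2 < n := by omega
    constructor
    · constructor
      · refine ⟨⟨⟨0, by omega⟩, ?_⟩,
          (univ.filter fun w : Fin n => (w:ℕ) ≤ 2*k ∧ Even (w:ℕ)), ?_⟩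
        · simp [mem_filter]
        · rw [oddNbhd_Dk hk]
          exact Ak_eq hk
      · intro B hB hBloc
        obtain ⟨hne, D, rfl⟩ := hBloc
        exact hB.ne (localset_subset_Ak hk D hne hB.subset)
    · rw [Ak_eq hk, card_union_of_disjoint, card_Dk (by omega), card_singleton]
      rw [Finset.disjoint_singleton_right]
      simp only [mem_filter, mem_univ, true_and, Nat.even_iff, Fin.val_mk]
      omega
  refine ⟨main, ?_⟩
  intro s hs1 hs2
  have hlt : s - 2 < (n + 1) / 2 - 1 := by omega
  refine ⟨_, (main (s-2) hlt).1, ?_⟩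
  rw [(main (s-2) hlt).2]
  omega
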